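/- Let A ∈ ℝ^{n×n}, B ∈ ℝ^{n×m}, U ⊆ ℝᵐ, X∞ ⊆ ℝⁿ, V_p : ℝⁿ → ℝ with α₁‖y‖² ≤ V_p(y) for all y (α₁ > 0), and let q, ρ ≥ 0 satisfy xᵀQx ≤ q‖x‖² and uᵀRu ≤ ρ‖u‖² for all x, u, where Q ⪰ 0, R ⪰ 0 are symmetric. Suppose there are c > 0 and a function λ* : ℝⁿ → [0,1) such that for every x ∈ X∞ there exists u ∈ U with ‖u‖ ≤ c‖x‖, A x + B u ∈ X∞, and V_p(A x + B u) ≤ λ*(x)² V_p(x). Define the state-dependent weight β*(x) := (q + c²ρ)/(α₁ (1 − λ*(x)²)). Then for every x ∈ X∞ there exists u ∈ U with A x + B u ∈ X∞ and β*(x) V_p(A x + B u) − β*(x) V_p(x) ≤ −ℓ(x,u), where ℓ(x,u) := xᵀQx + uᵀRu. -/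

import Mathlib

/-!
Along the admissible input of decay rate `λ = λ*(x)`, the weighted polyhedral function drops by
`β (1 - λ²) V_p(x) ≥ β (1 - λ²) α₁ ‖x‖²`, and `β*(x)` is chosen exactly so that this equals
`(q + c²ρ) ‖x‖²`, which dominates the stage cost because `‖u‖ ≤ c ‖x‖`.
-/

open scoped Matrix

theorem weighted_decrease_le_neg_of_decay {k α μ a v v' ℓ : ℝ} (hk : 0 ≤ k) (hα : 0 < α)
    (hμ : μ < 1) (hv : α * a ≤ v) (hv' : v' ≤ μ * v) (hℓ : ℓ ≤ k * a) :
    k / (α * (1 - μ)) * v' - k / (α * (1 - μ)) * v ≤ -ℓ := by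
  set β := k / (α * (1 - μ))
  have hden : 0 < α * (1 - μ) := mul_pos hα (sub_pos.2 hμ)
  have hβ : 0 ≤ β := div_nonneg hk hden.le
  have hβden : β * (α * (1 - μ)) = k := div_mul_cancel₀ _ hden.ne'
  calc β * v' - β * v ≤ β * (μ * v) - β * v := by gcongr
    _ = -(β * (1 - μ)) * v := by ring
    _ ≤ -(β * (1 - μ)) * (α * a) :=
      mul_le_mul_of_nonpos_left hv (neg_nonpos.2 (mul_nonneg hβ (sub_nonneg.2 hμ.le)))
    _ = -(k * a) := by rw [← hβden]; ring
    _ ≤ -ℓ := neg_le_neg hℓ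

def stageCost {n m : ℕ} (Q : Matrix (Fin n) (Fin n) ℝ) (R : Matrix (Fin m) (Fin m) ℝ)
    (x : EuclideanSpace ℝ (Fin n)) (u : EuclideanSpace ℝ (Fin m)) : ℝ :=
  (x : Fin n → ℝ) ⬝ᵥ Q.mulVec x + (u : Fin m → ℝ) ⬝ᵥ R.mulVec u

theorem stageCost_le {n m : ℕ} {Q : Matrix (Fin n) (Fin n) ℝ} {R : Matrix (Fin m) (Fin m) ℝ}
    {x : EuclideanSpace ℝ (Fin n)} {u : EuclideanSpace ℝ (Fin m)} {q ρ c : ℝ} (hρ : 0 ≤ ρ)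
    (hQ : (x : Fin n → ℝ) ⬝ᵥ Q.mulVec x ≤ q * ‖x‖ ^ 2)
    (hR : (u : Fin m → ℝ) ⬝ᵥ R.mulVec u ≤ ρ * ‖u‖ ^ 2) (hu : ‖u‖ ≤ c * ‖x‖) :
    stageCost Q R x u ≤ (q + c ^ 2 * ρ) * ‖x‖ ^ 2 := by
  have hu2 : ‖u‖ ^ 2 ≤ (c * ‖x‖) ^ 2 := pow_le_pow_left₀ (norm_nonneg u) hu 2
  calc stageCost Q R x u ≤ q * ‖x‖ ^ 2 + ρ * (c * ‖x‖) ^ 2 :=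
        add_le_add hQ (hR.trans (mul_le_mul_of_nonneg_left hu2 hρ))
    _ = (q + c ^ 2 * ρ) * ‖x‖ ^ 2 := by ring

theorem stmt_15_general {n m : ℕ} (A : Matrix (Fin n) (Fin n) ℝ) (B : Matrix (Fin n) (Fin m) ℝ)
    (U : Set (EuclideanSpace ℝ (Fin m))) (Xinf : Set (EuclideanSpace ℝ (Fin n)))
    (Vp : EuclideanSpace ℝ (Fin n) → ℝ) (α₁ : ℝ) (hα₁ : 0 < α₁)
    (hlow : ∀ y : EuclideanSpace ℝ (Fin n), α₁ * ‖y‖ ^ 2 ≤ Vp y)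
    (Q : Matrix (Fin n) (Fin n) ℝ) (R : Matrix (Fin m) (Fin m) ℝ)
    (q ρ : ℝ) (hq : 0 ≤ q) (hρ : 0 ≤ ρ)
    (hQ : ∀ x : EuclideanSpace ℝ (Fin n), (x : Fin n → ℝ) ⬝ᵥ Q.mulVec x ≤ q * ‖x‖ ^ 2)
    (hR : ∀ u : EuclideanSpace ℝ (Fin m), (u : Fin m → ℝ) ⬝ᵥ R.mulVec u ≤ ρ * ‖u‖ ^ 2)
    (c : ℝ)
    (lamStar : EuclideanSpace ℝ (Fin n) → ℝ)
    (hlamStar : ∀ x, 0 ≤ lamStar x ∧ lamStar x < 1)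
    (hdec : ∀ x ∈ Xinf, ∃ u ∈ U, ‖u‖ ≤ c * ‖x‖ ∧
      (WithLp.toLp 2 (A.mulVec x + B.mulVec u) : EuclideanSpace ℝ (Fin n)) ∈ Xinf ∧
      Vp (WithLp.toLp 2 (A.mulVec x + B.mulVec u) : EuclideanSpace ℝ (Fin n)) ≤ lamStar x ^ 2 * Vp x) :
    ∀ x ∈ Xinf, ∃ u ∈ U,
      (WithLp.toLp 2 (A.mulVec x + B.mulVec u) : EuclideanSpace ℝ (Fin n)) ∈ Xinf ∧
      (q + c ^ 2 * ρ) / (α₁ * (1 - lamStar x ^ 2)) *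
          Vp (WithLp.toLp 2 (A.mulVec x + B.mulVec u) : EuclideanSpace ℝ (Fin n)) -
        (q + c ^ 2 * ρ) / (α₁ * (1 - lamStar x ^ 2)) * Vp x ≤
        -((x : Fin n → ℝ) ⬝ᵥ Q.mulVec x + (u : Fin m → ℝ) ⬝ᵥ R.mulVec u) := by
  intro x hx
  obtain ⟨u, hu, hnorm, hmem, hVp⟩ := hdec x hx
  obtain ⟨hlam₀, hlam₁⟩ := hlamStar x
  refine ⟨u, hu, hmem, weighted_decrease_le_neg_of_decay (by positivity) hα₁
    (pow_lt_one₀ hlam₀ hlam₁ two_ne_zero) (hlow x) hVp ?_⟩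
  exact stageCost_le hρ (hQ x) (hR u) hnorm

/-- (Key inequality for MPC 1b with state-dependent terminal weight.)
Assume `α₁‖y‖² ≤ V_p(y)`, `xᵀQx ≤ q‖x‖²`, `uᵀRu ≤ ρ‖u‖²` (`Q ⪰ 0`, `R ⪰ 0` symmetric,
`q, ρ ≥ 0`), and that every `x ∈ X∞` admits `u ∈ U` with `‖u‖ ≤ c‖x‖`, `Ax + Bu ∈ X∞`
and `V_p(Ax+Bu) ≤ λ*(x)² V_p(x)`, where `λ*(x) ∈ [0,1)`. Then with
`β*(x) := (q + c²ρ)/(α₁(1 − λ*(x)²))`, for every `x ∈ X∞` there is `u ∈ U` with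
`Ax + Bu ∈ X∞` and `β*(x) V_p(Ax+Bu) − β*(x) V_p(x) ≤ −ℓ(x,u)`. -/
theorem stmt_15 {n m : ℕ} (A : Matrix (Fin n) (Fin n) ℝ) (B : Matrix (Fin n) (Fin m) ℝ)
    (U : Set (EuclideanSpace ℝ (Fin m))) (Xinf : Set (EuclideanSpace ℝ (Fin n)))
    (Vp : EuclideanSpace ℝ (Fin n) → ℝ) (α₁ : ℝ) (hα₁ : 0 < α₁)
    (hlow : ∀ y : EuclideanSpace ℝ (Fin n), α₁ * ‖y‖ ^ 2 ≤ Vp y)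
    (Q : Matrix (Fin n) (Fin n) ℝ) (R : Matrix (Fin m) (Fin m) ℝ)
    (hQpsd : Q.PosSemidef) (hRpsd : R.PosSemidef)
    (q ρ : ℝ) (hq : 0 ≤ q) (hρ : 0 ≤ ρ)
    (hQ : ∀ x : EuclideanSpace ℝ (Fin n), (x : Fin n → ℝ) ⬝ᵥ Q.mulVec x ≤ q * ‖x‖ ^ 2)
    (hR : ∀ u : EuclideanSpace ℝ (Fin m), (u : Fin m → ℝ) ⬝ᵥ R.mulVec u ≤ ρ * ‖u‖ ^ 2)
    (c : ℝ) (hc : 0 < c)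
    (lamStar : EuclideanSpace ℝ (Fin n) → ℝ)
    (hlamStar : ∀ x, 0 ≤ lamStar x ∧ lamStar x < 1)
    (hdec : ∀ x ∈ Xinf, ∃ u ∈ U, ‖u‖ ≤ c * ‖x‖ ∧
      (WithLp.toLp 2 (A.mulVec x + B.mulVec u) : EuclideanSpace ℝ (Fin n)) ∈ Xinf ∧
      Vp (WithLp.toLp 2 (A.mulVec x + B.mulVec u) : EuclideanSpace ℝ (Fin n)) ≤ lamStar x ^ 2 * Vp x) :
    ∀ x ∈ Xinf, ∃ u ∈ U,
      (WithLp.toLp 2 (A.mulVec x + B.mulVec u) : EuclideanSpace ℝ (Fin n)) ∈ Xinf ∧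
      (q + c ^ 2 * ρ) / (α₁ * (1 - lamStar x ^ 2)) *
          Vp (WithLp.toLp 2 (A.mulVec x + B.mulVec u) : EuclideanSpace ℝ (Fin n)) -
        (q + c ^ 2 * ρ) / (α₁ * (1 - lamStar x ^ 2)) * Vp x ≤
        -((x : Fin n → ℝ) ⬝ᵥ Q.mulVec x + (u : Fin m → ℝ) ⬝ᵥ R.mulVec u) :=
  stmt_15_general A B U Xinf Vp α₁ hα₁ hlow Q R q ρ hq hρ hQ hR c lamStar hlamStar hdec
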